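/- Let Ω ∈ (0,1) be a quadratic irrational with purely periodic continued fraction, associated matrices T, U, eigenvalue λ > 1, and write T = [[a,b],[c,d]]. For any primitive integer q, the resonant sequence s(q,n) = Uⁿk⁰(q) satisfies |s(q,n)|₁ = K_q·λⁿ + O(λ^{−n}) as n → ∞, i.e. there exists C > 0 such that | |s(q,n)|₁ − K_q λⁿ | ≤ C λ^{−n} for all n ≥ 0, where K_q = |z_q|(1+Ω)/|c+bΩ²| and z_q = cq + bpΩ with p = p⁰(q). -/

import Mathlib

/-!
`U = σ (T⁻¹)ᵀ` is the transposed adjugate of `T = [[a, b], [c, d]]`. From `Tω = λω` one gets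
`U (-Ω, 1) = λ (-Ω, 1)` and `U (c, bΩ) = μ (c, bΩ)` with `μ = d - bΩ`, `λμ = det T = ±1`.
Expanding `k⁰(q) = α (-Ω, 1) + β (c, bΩ)`, where `α = z_q / (c + bΩ²)`, gives
`Uⁿ k⁰(q) = αλⁿ (-Ω, 1) + βμⁿ (c, bΩ)`: the first term has `ℓ¹`-norm `|α|(1 + Ω)λⁿ = K_q λⁿ`,
and the second is `O(λ⁻ⁿ)` because `|μ| = λ⁻¹`.
-/
open Real Filter Matrix

noncomputable section

/-- Orbit of the Gauss map `g(x) = {1/x}` starting at `Ω`: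
`x₀ = Ω`, `x_{j+1} = g(x_j)`. -/
def gaussOrbit (Ω : ℝ) : ℕ → ℝ
  | 0 => Ω
  | j + 1 => Int.fract (1 / gaussOrbit Ω j)

/-- `cfA Ω j` is the partial quotient `a_{j+1}` of the continued fraction of `Ω`. -/
def cfA (Ω : ℝ) (j : ℕ) : ℤ := ⌊1 / gaussOrbit Ω j⌋

/-- The matrix `[[a, 1], [1, 0]]`. -/
def Acf (a : ℤ) : Matrix (Fin 2) (Fin 2) ℤ := !![a, 1; 1, 0]

/-- The product `A₁ ⋯ A_m` with `A_i = [[a_i, 1], [1, 0]]`. -/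
def cfMatProd (Ω : ℝ) (m : ℕ) : Matrix (Fin 2) (Fin 2) ℤ :=
  ((List.range m).map fun i => Acf (cfA Ω i)).prod

/-- `cfQ Ω (j+1) = q_j`:  `q₋₁ = 0`, `q₀ = 1`, `q_j = a_j q_{j-1} + q_{j-2}`. -/
def cfQ (Ω : ℝ) : ℕ → ℤ
  | 0 => 0
  | 1 => 1
  | j + 2 => cfA Ω j * cfQ Ω (j + 1) + cfQ Ω j

/-- `cfP Ω (j+1) = p_j`:  `p₋₁ = 1`, `p₀ = 0`, `p_j = a_j p_{j-1} + p_{j-2}`. -/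
def cfP (Ω : ℝ) : ℕ → ℤ
  | 0 => 1
  | 1 => 0
  | j + 2 => cfA Ω j * cfP Ω (j + 1) + cfP Ω j

/-- The vector convergent `w(j) = (q_j, p_j)`. -/
def wconv (Ω : ℝ) (j : ℕ) : Fin 2 → ℤ := ![cfQ Ω (j + 1), cfP Ω (j + 1)]

/-- The resonant convergent `v(j) = (−p_j, q_j)`. -/
def vconv (Ω : ℝ) (j : ℕ) : Fin 2 → ℤ := ![-cfP Ω (j + 1), cfQ Ω (j + 1)]

/-- A quadratic irrational number. -/
def IsQuadraticIrrational (Ω : ℝ) : Prop :=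
  Irrational Ω ∧ ∃ A B C : ℤ, A ≠ 0 ∧ (A : ℝ) * Ω ^ 2 + (B : ℝ) * Ω + (C : ℝ) = 0

end
noncomputable section

/-- `⟨k, ω⟩ = k₁ + k₂ Ω` for `ω = (1, Ω)`. -/
def pairω (Ω : ℝ) (k : Fin 2 → ℤ) : ℝ := (k 0 : ℝ) + (k 1 : ℝ) * Ω

/-- `|k|₁ = |k₁| + |k₂|`. -/
def norm1 (k : Fin 2 → ℤ) : ℤ := |k 0| + |k 1|

/-- `p⁰(q)`: the integer nearest to `qΩ`. -/
def p0 (Ω : ℝ) (q : ℤ) : ℤ := round ((q : ℝ) * Ω)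

/-- `k⁰(q) = (−p⁰(q), q)`. -/
def kzero (Ω : ℝ) (q : ℤ) : Fin 2 → ℤ := ![-p0 Ω q, q]

/-- The set `A` of quasi-resonances: vectors `k⁰(q)`, `q ≥ 1`, with `|⟨k,ω⟩| < 1/2`. -/
def inA (Ω : ℝ) (k : Fin 2 → ℤ) : Prop :=
  ∃ q : ℤ, 1 ≤ q ∧ k = kzero Ω q ∧ |pairω Ω k| < 1 / 2

/-- A quasi-resonance `k` is primitive if `U⁻¹k` is not a quasi-resonance. -/
def PrimitiveVec (Ω : ℝ) (U : Matrix (Fin 2) (Fin 2) ℤ) (k : Fin 2 → ℤ) : Prop :=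
  inA Ω k ∧ ¬inA Ω (U⁻¹.mulVec k)

/-- A primitive integer `q ≥ 1`. -/
def PrimitiveInt (Ω : ℝ) (U : Matrix (Fin 2) (Fin 2) ℤ) (q : ℤ) : Prop :=
  1 ≤ q ∧ PrimitiveVec Ω U (kzero Ω q)

/-- The resonant sequence `s(q, n) = Uⁿ k⁰(q)`. -/
def sres (Ω : ℝ) (U : Matrix (Fin 2) (Fin 2) ℤ) (q : ℤ) (n : ℕ) : Fin 2 → ℤ :=
  (U ^ n).mulVec (kzero Ω q)

/-- `U = σ (T⁻¹)ᵀ` with `σ = det T = (−1)^m` and `T = A₁⋯A_m`. -/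
def Umat (Ω : ℝ) (m : ℕ) : Matrix (Fin 2) (Fin 2) ℤ :=
  ((-1 : ℤ) ^ m) • ((cfMatProd Ω m)⁻¹)ᵀ

/-- The numerator `γ_k = |⟨k,ω⟩| · |k|₁`. -/
def gammaK (Ω : ℝ) (k : Fin 2 → ℤ) : ℝ := |pairω Ω k| * (norm1 k : ℝ)

/-- `K_q = |z_q|(1+Ω)/|c+bΩ²|`, where `z_q = cq + bpΩ`, `p = p⁰(q)`,
and `b, c` are the off-diagonal entries of `T = A₁⋯A_m = [[a,b],[c,d]]`. -/
def KqD (Ω : ℝ) (m : ℕ) (q : ℤ) : ℝ :=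
  |(cfMatProd Ω m 1 0 : ℝ) * (q : ℝ) + (cfMatProd Ω m 0 1 : ℝ) * (p0 Ω q : ℝ) * Ω| * (1 + Ω) /
    |(cfMatProd Ω m 1 0 : ℝ) + (cfMatProd Ω m 0 1 : ℝ) * Ω ^ 2|

/-- The limit numerator `γ*_q = |r_q| K_q` with `r_q = qΩ − p⁰(q)`. -/
def gammaStarQ (Ω : ℝ) (m : ℕ) (q : ℤ) : ℝ :=
  |(q : ℝ) * Ω - (p0 Ω q : ℝ)| * KqD Ω m q

end

lemma Matrix.pow_mulVec_of_mulVec_eq_smul {n R : Type*} [Fintype n] [DecidableEq n]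
    [CommSemiring R] {M : Matrix n n R} {v : n → R} {c : R} (h : M *ᵥ v = c • v) (k : ℕ) :
    (M ^ k) *ᵥ v = c ^ k • v := by
  induction k with
  | zero => simp
  | succ k ih => rw [pow_succ', ← mulVec_mulVec, ih, mulVec_smul, h, smul_smul, pow_succ]

lemma abs_l1_add_sub_le (u v : Fin 2 → ℝ) :
    |(|u 0 + v 0| + |u 1 + v 1|) - (|u 0| + |u 1|)| ≤ |v 0| + |v 1| := by
  have h0 : |u 0| ≤ |u 0 + v 0| + |v 0| := by simpa using abs_add_le (u 0 + v 0) (-v 0)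
  have h1 : |u 1| ≤ |u 1 + v 1| + |v 1| := by simpa using abs_add_le (u 1 + v 1) (-v 1)
  rw [abs_le]
  constructor <;> linarith [abs_add_le (u 0) (v 0), abs_add_le (u 1) (v 1)]

lemma Matrix.transpose_adjugate_fin_two {R : Type*} [CommRing R] (A : Matrix (Fin 2) (Fin 2) R) :
    A.adjugateᵀ = !![A 1 1, -A 1 0; -A 0 1, A 0 0] := by
  rw [adjugate_fin_two]
  ext i j
  fin_cases i <;> fin_cases j <;> rfl

section EigenvectorOneOmega

variable {T : Matrix (Fin 2) (Fin 2) ℝ} {Ω lam : ℝ}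

lemma eigen_row_zero (h : T *ᵥ ![1, Ω] = lam • ![1, Ω]) : T 0 0 + T 0 1 * Ω = lam := by
  simpa using congrFun h 0

lemma eigen_row_one (h : T *ᵥ ![1, Ω] = lam • ![1, Ω]) : T 1 0 + T 1 1 * Ω = lam * Ω := by
  simpa using congrFun h 1

lemma eigen_quadratic (h : T *ᵥ ![1, Ω] = lam • ![1, Ω]) :
    T 0 1 * Ω ^ 2 + (T 0 0 - T 1 1) * Ω - T 1 0 = 0 := by
  linear_combination Ω * eigen_row_zero h - eigen_row_one h

/-- With `T = [[a, b], [c, d]]` and `λ = a + bΩ`, the other eigenvalue `μ = tr T - λ` of `T`. -/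
def complEigenvalue (T : Matrix (Fin 2) (Fin 2) ℝ) (Ω : ℝ) : ℝ := T 1 1 - T 0 1 * Ω

lemma mul_complEigenvalue (h : T *ᵥ ![1, Ω] = lam • ![1, Ω]) :
    lam * complEigenvalue T Ω = T.det := by
  rw [det_fin_two, complEigenvalue, ← eigen_row_zero h]
  linear_combination -T 0 1 * eigen_quadratic h

lemma abs_complEigenvalue (h : T *ᵥ ![1, Ω] = lam • ![1, Ω]) (hdet : |T.det| = 1)
    (hlam : 0 < lam) : |complEigenvalue T Ω| = lam⁻¹ := by
  refine eq_inv_of_mul_eq_one_left ?_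
  rw [← abs_of_pos hlam, ← abs_mul, mul_comm, mul_complEigenvalue h, hdet]

lemma transpose_adjugate_mulVec_expanding (h : T *ᵥ ![1, Ω] = lam • ![1, Ω]) :
    T.adjugateᵀ *ᵥ ![-Ω, 1] = lam • ![-Ω, 1] := by
  rw [transpose_adjugate_fin_two, mulVec_fin_two, smul_vec2]
  refine vec2_eq ?_ ?_ <;> simp only [of_apply, cons_val_zero, cons_val_one, cons_val_fin_one,
    smul_eq_mul]
  · linear_combination -eigen_row_one h
  · linear_combination eigen_row_zero h

lemma transpose_adjugate_mulVec_contracting (h : T *ᵥ ![1, Ω] = lam • ![1, Ω]) :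
    T.adjugateᵀ *ᵥ ![T 1 0, T 0 1 * Ω] = complEigenvalue T Ω • ![T 1 0, T 0 1 * Ω] := by
  rw [transpose_adjugate_fin_two, mulVec_fin_two, smul_vec2, complEigenvalue]
  refine vec2_eq ?_ ?_ <;> simp only [of_apply, cons_val_zero, cons_val_one, cons_val_fin_one,
    smul_eq_mul]
  · ring
  · linear_combination T 0 1 * eigen_quadratic h

/-- `c + bΩ²` is, up to sign, the determinant of the eigenbasis `(-Ω, 1), (c, bΩ)` of
`T.adjugateᵀ`; this form shows it is nonzero once `|μ| < λ`. -/
lemma eigenbasis_det_eq (h : T *ᵥ ![1, Ω] = lam • ![1, Ω]) :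
    T 1 0 + T 0 1 * Ω ^ 2 = Ω * (lam - complEigenvalue T Ω) := by
  rw [complEigenvalue]
  linear_combination eigen_row_one h

/-- Coordinate along `(-Ω, 1)` in the eigenbasis `(-Ω, 1), (c, bΩ)` of `T.adjugateᵀ`. -/
noncomputable def expandingCoord (T : Matrix (Fin 2) (Fin 2) ℝ) (Ω : ℝ) (x : Fin 2 → ℝ) : ℝ :=
  (T 1 0 * x 1 - T 0 1 * Ω * x 0) / (T 1 0 + T 0 1 * Ω ^ 2)

/-- Coordinate along `(c, bΩ)` in the eigenbasis `(-Ω, 1), (c, bΩ)` of `T.adjugateᵀ`. -/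
noncomputable def contractingCoord (T : Matrix (Fin 2) (Fin 2) ℝ) (Ω : ℝ) (x : Fin 2 → ℝ) : ℝ :=
  (x 0 + Ω * x 1) / (T 1 0 + T 0 1 * Ω ^ 2)

lemma eq_expandingCoord_smul_add_contractingCoord_smul (hD : T 1 0 + T 0 1 * Ω ^ 2 ≠ 0)
    (x : Fin 2 → ℝ) :
    x = expandingCoord T Ω x • ![-Ω, 1] + contractingCoord T Ω x • ![T 1 0, T 0 1 * Ω] := by
  rw [smul_vec2, smul_vec2, vec2_add, expandingCoord, contractingCoord]
  ext i
  fin_cases i <;> simp only [Fin.zero_eta, Fin.mk_one, cons_val_zero, cons_val_one,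
    cons_val_fin_one, smul_eq_mul] <;> field_simp <;> ring

lemma transpose_adjugate_pow_mulVec (h : T *ᵥ ![1, Ω] = lam • ![1, Ω])
    (hD : T 1 0 + T 0 1 * Ω ^ 2 ≠ 0) (x : Fin 2 → ℝ) (n : ℕ) :
    (T.adjugateᵀ ^ n) *ᵥ x = (expandingCoord T Ω x * lam ^ n) • ![-Ω, 1] +
      (contractingCoord T Ω x * complEigenvalue T Ω ^ n) • ![T 1 0, T 0 1 * Ω] := by
  conv_lhs => rw [eq_expandingCoord_smul_add_contractingCoord_smul hD x]
  rw [mulVec_add, mulVec_smul, mulVec_smul,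
    pow_mulVec_of_mulVec_eq_smul (transpose_adjugate_mulVec_expanding h),
    pow_mulVec_of_mulVec_eq_smul (transpose_adjugate_mulVec_contracting h), smul_smul, smul_smul]

theorem abs_l1_transpose_adjugate_pow_mulVec_sub_le (h : T *ᵥ ![1, Ω] = lam • ![1, Ω])
    (hdet : |T.det| = 1) (hlam : 1 < lam) (hΩ : 0 < Ω) (x : Fin 2 → ℝ) (n : ℕ) :
    |(|((T.adjugateᵀ ^ n) *ᵥ x) 0| + |((T.adjugateᵀ ^ n) *ᵥ x) 1|) -
        |expandingCoord T Ω x| * (1 + Ω) * lam ^ n| ≤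
      |contractingCoord T Ω x| * (|T 1 0| + |T 0 1| * Ω) * (lam ^ n)⁻¹ := by
  have hμ := abs_complEigenvalue h hdet (zero_lt_one.trans hlam)
  have hD : T 1 0 + T 0 1 * Ω ^ 2 ≠ 0 := by
    have : |complEigenvalue T Ω| < lam := by
      rw [hμ]; exact (inv_lt_one_of_one_lt₀ hlam).trans hlam
    rw [eigenbasis_det_eq h]
    exact mul_ne_zero hΩ.ne' (sub_pos.2 (lt_of_abs_lt this)).ne'
  set u : Fin 2 → ℝ := (expandingCoord T Ω x * lam ^ n) • ![-Ω, 1]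
  set v : Fin 2 → ℝ := (contractingCoord T Ω x * complEigenvalue T Ω ^ n) • ![T 1 0, T 0 1 * Ω]
  have hu : |u 0| + |u 1| = |expandingCoord T Ω x| * (1 + Ω) * lam ^ n := by
    simp only [u, smul_vec2, smul_eq_mul, cons_val_zero, cons_val_one, cons_val_fin_one, abs_mul,
      abs_neg, abs_one, abs_pow, abs_of_pos hΩ, abs_of_pos (zero_lt_one.trans hlam)]
    ring
  have hv : |v 0| + |v 1| = |contractingCoord T Ω x| * (|T 1 0| + |T 0 1| * Ω) * (lam ^ n)⁻¹ := by
    simp only [v, smul_vec2, smul_eq_mul, cons_val_zero, cons_val_one, cons_val_fin_one, abs_mul,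
      abs_pow, abs_of_pos hΩ, hμ, inv_pow]
    ring
  rw [transpose_adjugate_pow_mulVec h hD, ← hu, ← hv]
  exact abs_l1_add_sub_le u v

end EigenvectorOneOmega

lemma cfMatProd_succ (Ω : ℝ) (m : ℕ) : cfMatProd Ω (m + 1) = cfMatProd Ω m * Acf (cfA Ω m) := by
  simp [cfMatProd, List.range_succ]

lemma cfMatProd_det (Ω : ℝ) (m : ℕ) : (cfMatProd Ω m).det = (-1) ^ m := by
  induction m with
  | zero => simp [cfMatProd]
  | succ m ih => simp [cfMatProd_succ, ih, Acf, det_fin_two_of, pow_succ]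

lemma Umat_eq_transpose_adjugate (Ω : ℝ) (m : ℕ) : Umat Ω m = (cfMatProd Ω m).adjugateᵀ := by
  have hsq : ((-1 : ℤ) ^ m) * (-1) ^ m = 1 := by rw [← mul_pow]; simp
  have hinv : (cfMatProd Ω m)⁻¹ = ((-1 : ℤ) ^ m) • (cfMatProd Ω m).adjugate := by
    apply inv_eq_right_inv
    rw [Matrix.mul_smul, mul_adjugate, cfMatProd_det, smul_smul, hsq, one_smul]
  rw [Umat, hinv, transpose_smul, smul_smul, hsq, one_smul]

lemma cast_sres_apply (Ω : ℝ) (m : ℕ) (q : ℤ) (n : ℕ) (i : Fin 2) :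
    ((sres Ω (Umat Ω m) q n i : ℤ) : ℝ) =
      ((((cfMatProd Ω m).map ((↑) : ℤ → ℝ)).adjugateᵀ ^ n) *ᵥ fun j => (kzero Ω q j : ℝ)) i := by
  rw [sres, ← eq_intCast (Int.castRingHom ℝ), RingHom.map_mulVec, Matrix.map_pow,
    Umat_eq_transpose_adjugate, transpose_map, ← RingHom.mapMatrix_apply,
    RingHom.map_adjugate]
  rfl

lemma KqD_eq_abs_expandingCoord (Ω : ℝ) (m : ℕ) (q : ℤ) :
    KqD Ω m q = |expandingCoord ((cfMatProd Ω m).map ((↑) : ℤ → ℝ)) Ω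
      (fun j => (kzero Ω q j : ℝ))| * (1 + Ω) := by
  simp only [KqD, expandingCoord, kzero, map_apply, cons_val_zero, cons_val_one, cons_val_fin_one,
    Int.cast_neg, abs_div]
  ring_nf

theorem splitting_quadratic_stmt7_general
    (Ω : ℝ) (m : ℕ) (h0 : 0 < Ω)
    (lam : ℝ) (hlam : 1 < lam)
    (heig : ((cfMatProd Ω m).map fun z : ℤ => (z : ℝ)).mulVec ![1, Ω] = lam • ![1, Ω])
    (q : ℤ) :
    ∃ C : ℝ, 0 < C ∧ ∀ n : ℕ,
      |((norm1 (sres Ω (Umat Ω m) q n) : ℝ)) - KqD Ω m q * lam ^ n| ≤ C * (lam ^ n)⁻¹ := by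
  set T : Matrix (Fin 2) (Fin 2) ℝ := (cfMatProd Ω m).map ((↑) : ℤ → ℝ)
  set k : Fin 2 → ℝ := fun j => (kzero Ω q j : ℝ)
  have hdet : |T.det| = 1 := by simp [T, ← Int.cast_det, cfMatProd_det]
  refine ⟨|contractingCoord T Ω k| * (|T 1 0| + |T 0 1| * Ω) + 1, by positivity, fun n => ?_⟩
  have hnorm : (norm1 (sres Ω (Umat Ω m) q n) : ℝ) =
      |((T.adjugateᵀ ^ n) *ᵥ k) 0| + |((T.adjugateᵀ ^ n) *ᵥ k) 1| := by
    simp [norm1, cast_sres_apply, T, k]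
  rw [hnorm, KqD_eq_abs_expandingCoord]
  calc _ ≤ |contractingCoord T Ω k| * (|T 1 0| + |T 0 1| * Ω) * (lam ^ n)⁻¹ :=
        abs_l1_transpose_adjugate_pow_mulVec_sub_le heig hdet hlam h0 k n
    _ ≤ _ := by gcongr; linarith

/-- Proposition 3(a): for a primitive `q`, the resonant sequence `s(q,n) = Uⁿk⁰(q)`
satisfies `|s(q,n)|₁ = K_q λⁿ + O(λ^{−n})`. -/
theorem splitting_quadratic_stmt7
    (Ω : ℝ) (m : ℕ) (hm : 1 ≤ m) (h0 : 0 < Ω) (h1 : Ω < 1)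
    (hquad : IsQuadraticIrrational Ω)
    (hper : gaussOrbit Ω m = Ω)
    (lam : ℝ) (hlam : 1 < lam)
    (heig : ((cfMatProd Ω m).map fun z : ℤ => (z : ℝ)).mulVec ![1, Ω] = lam • ![1, Ω])
    (q : ℤ) (hq : PrimitiveInt Ω (Umat Ω m) q) :
    ∃ C : ℝ, 0 < C ∧ ∀ n : ℕ,
      |((norm1 (sres Ω (Umat Ω m) q n) : ℝ)) - KqD Ω m q * lam ^ n| ≤ C * (lam ^ n)⁻¹ :=
  splitting_quadratic_stmt7_general Ω m h0 lam hlam heig q
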